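/- arXiv:1302.1340 — 4 statements merged into one kernel-verified Lean document; each statement's English description precedes it below -/
import Mathlib

section
/- If F' is a non-empty subset of F₀, then the collection {X(f,r) : f ∈ F', r > 0} is an F-family on X. -/
open Set

variable {X : Type*} [Nonempty X] [TopologicalSpace X] [DiscreteTopology X]

/-- The set `X(f,r) = {x ∈ X : |f(x)| ≤ r}`. -/
def XSet (f : BoundedContinuousFunction X ℂ) (r : ℝ) : Set X := {x | ‖f x‖ ≤ r}

/-- An `F`-family on `X`: a nonempty collection of nonempty subsets of `X` such that for every
member `A ≠ X` there are `B` in the collection and `f ∈ F` with `f(B) = {0}`,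
`f(X \ A) = {1}`. -/
def FFamily (F : StarSubalgebra ℂ (BoundedContinuousFunction X ℂ)) (𝒜 : Set (Set X)) : Prop :=
  𝒜.Nonempty ∧ (∀ A ∈ 𝒜, A.Nonempty) ∧
    ∀ A ∈ 𝒜, A ≠ Set.univ →
      ∃ B ∈ 𝒜, ∃ f ∈ F, (∀ x ∈ B, f x = 0) ∧ ∀ x ∉ A, f x = 1

/-- A filter on the set `X`, viewed as a collection of subsets. -/
def IsSetFilter (φ : Set (Set X)) : Prop :=
  φ.Nonempty ∧ (∀ A ∈ φ, ∀ B ∈ φ, A ∩ B ∈ φ) ∧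
    (∀ A ∈ φ, ∀ B : Set X, A ⊆ B → B ∈ φ) ∧ ∅ ∉ φ

/-- An `F`-filter on `X` is a filter which is also an `F`-family. -/
def FFilter (F : StarSubalgebra ℂ (BoundedContinuousFunction X ℂ)) (φ : Set (Set X)) : Prop :=
  IsSetFilter φ ∧ FFamily F φ

/-- An `F`-ultrafilter on `X` is an `F`-filter maximal with respect to inclusion. -/
def FUltrafilter (F : StarSubalgebra ℂ (BoundedContinuousFunction X ℂ)) (φ : Set (Set X)) : Prop :=
  FFilter F φ ∧ ∀ ψ : Set (Set X), FFilter F ψ → φ ⊆ ψ → ψ = φ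

/-- `F₀ = {f ∈ F : X(f,r) ≠ ∅ for all r > 0}`. -/
def FZero (F : StarSubalgebra ℂ (BoundedContinuousFunction X ℂ)) :
    Set (BoundedContinuousFunction X ℂ) :=
  {f | f ∈ F ∧ ∀ r : ℝ, 0 < r → (XSet f r).Nonempty}

/-- `Z(A) = {f ∈ F : f(x) = 0 for all x ∈ A}`. -/
def ZSet (F : StarSubalgebra ℂ (BoundedContinuousFunction X ℂ)) (A : Set X) :
    Set (BoundedContinuousFunction X ℂ) :=
  {f | f ∈ F ∧ ∀ x ∈ A, f x = 0}

/-- The finite intersection property. -/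
def FIP (𝒜 : Set (Set X)) : Prop :=
  ∀ s : Finset (Set X), ↑s ⊆ 𝒜 → s.Nonempty → (⋂₀ (s : Set (Set X))).Nonempty

/-- A filter base on `X`. -/
def IsFilterBase (ℬ : Set (Set X)) : Prop :=
  ℬ.Nonempty ∧ ∅ ∉ ℬ ∧ ∀ A ∈ ℬ, ∀ B ∈ ℬ, ∃ C ∈ ℬ, C ⊆ A ∩ B

/-- The filter generated by a filter base. -/
def genFilter (ℬ : Set (Set X)) : Set (Set X) :=
  {A | ∃ B ∈ ℬ, B ⊆ A}

/-- `δX`, the space of all `F`-ultrafilters on `X`. -/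
def Delta (F : StarSubalgebra ℂ (BoundedContinuousFunction X ℂ)) : Type _ :=
  {p : Set (Set X) // FUltrafilter F p}

/-- `Â = {p ∈ δX : A ∈ p}`. -/
def hatSet (F : StarSubalgebra ℂ (BoundedContinuousFunction X ℂ)) (A : Set X) :
    Set (Delta F) :=
  {p | A ∈ p.1}

/-- The topology on `δX` having `{Â : A ⊆ X}` as a base. -/
instance (F : StarSubalgebra ℂ (BoundedContinuousFunction X ℂ)) :
    TopologicalSpace (Delta F) :=
  TopologicalSpace.generateFrom {S | ∃ A : Set X, S = hatSet F A}

/-- For an `F`-filter `φ`, `φ̂ = {p ∈ δX : φ ⊆ p}`. -/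
def hatF (F : StarSubalgebra ℂ (BoundedContinuousFunction X ℂ)) (φ : Set (Set X)) :
    Set (Delta F) :=
  {p | φ ⊆ p.1}

/-- `τ(F)`, the weakest topology on `X` making every member of `F` continuous. -/
noncomputable def tauF (F : StarSubalgebra ℂ (BoundedContinuousFunction X ℂ)) : TopologicalSpace X :=
  ⨅ f ∈ (F : Set (BoundedContinuousFunction X ℂ)),
    TopologicalSpace.induced (fun x => f x) inferInstance

/-- `B(I) = {X(f,r) : f ∈ I, r > 0}` for an ideal `I` of `F`. -/
def BIdeal (F : StarSubalgebra ℂ (BoundedContinuousFunction X ℂ)) (I : Ideal F) :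
    Set (Set X) :=
  {S | ∃ f ∈ I, ∃ r : ℝ, 0 < r ∧ S = XSet (f : BoundedContinuousFunction X ℂ) r}

/-! A member `X(f,r)` of the collection is separated from the complement of `X(f,r)` by the
smaller member `X(f,r/2)`: by Urysohn's lemma on `ℂ` there is a continuous `φ` vanishing on the
disc of radius `r/2` and equal to `1` outside the disc of radius `r`, and `φ ∘ f` is the element
`cfc φ f` of the continuous functional calculus, which stays in the closed star subalgebra `F`. -/

namespace BoundedContinuousFunction

variable {Y : Type*} [TopologicalSpace Y]

theorem cfc_apply_of_continuous (f : Y →ᵇ ℂ) {φ : ℂ → ℂ} (hφ : Continuous φ) (y : Y) :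
    cfc φ f y = φ (f y) := by
  let ev : (Y →ᵇ ℂ) →⋆ₐ[ℂ] ℂ :=
    (ContinuousMap.evalStarAlgHom ℂ ℂ y).comp (toContinuousMapStarₐ ℂ)
  calc cfc φ f y = ev (cfc φ f) := rfl
    _ = cfc φ (ev f) := ev.map_cfc φ f hφ.continuousOn (continuous_eval_const y)
    _ = φ (f y) := cfc_algebraMap (A := ℂ) (f y) φ

theorem exists_mem_eq_zero_eq_one_of_norm (F : StarSubalgebra ℂ (Y →ᵇ ℂ))
    [IsClosed (F : Set (Y →ᵇ ℂ))] {f : Y →ᵇ ℂ} (hf : f ∈ F) {r s : ℝ} (hrs : r < s) :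
    ∃ g ∈ F, (∀ y, ‖f y‖ ≤ r → g y = 0) ∧ ∀ y, s ≤ ‖f y‖ → g y = 1 := by
  have hdisj : Disjoint {z : ℂ | ‖z‖ ≤ r} {z | s ≤ ‖z‖} :=
    disjoint_left.2 fun z hr hs => (lt_of_le_of_lt hr hrs).not_ge hs
  obtain ⟨φ, hφ₀, hφ₁, -⟩ := exists_continuous_zero_one_of_isClosed
    (isClosed_le continuous_norm continuous_const) (isClosed_le continuous_const continuous_norm)
    hdisj
  have hcont : Continuous fun z => (φ z : ℂ) := by fun_prop
  refine ⟨cfc (fun z => (φ z : ℂ)) f, cfc_mem _ hf, fun y hy => ?_, fun y hy => ?_⟩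
  · simp [cfc_apply_of_continuous f hcont, hφ₀ (mem_setOf.2 hy)]
  · simp [cfc_apply_of_continuous f hcont, hφ₁ (mem_setOf.2 hy)]

end BoundedContinuousFunction

theorem stmt0 (F : StarSubalgebra ℂ (BoundedContinuousFunction X ℂ)) (hF : IsClosed (F : Set (BoundedContinuousFunction X ℂ)))
    (F' : Set (BoundedContinuousFunction X ℂ)) (hne : F'.Nonempty) (hsub : F' ⊆ FZero F) :
    FFamily F {S | ∃ f ∈ F', ∃ r : ℝ, 0 < r ∧ S = XSet f r} := by
  refine ⟨?_, ?_, ?_⟩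
  · obtain ⟨f, hf⟩ := hne
    exact ⟨XSet f 1, f, hf, 1, one_pos, rfl⟩
  · rintro A ⟨f, hf, r, hr, rfl⟩
    exact (hsub hf).2 r hr
  · rintro A ⟨f, hf, r, hr, rfl⟩ -
    obtain ⟨g, hgF, hg₀, hg₁⟩ := BoundedContinuousFunction.exists_mem_eq_zero_eq_one_of_norm F
      (hsub hf).1 (half_lt_self hr)
    exact ⟨XSet f (r / 2), ⟨f, hf, r / 2, half_pos hr, rfl⟩, g, hgF, hg₀,
      fun x hx => hg₁ x (le_of_lt (not_le.1 hx))⟩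
end

section
/- If 𝒜 is an F-family on X which has the finite intersection property (every finite subfamily of 𝒜 has non-empty intersection), then there exists an F-ultrafilter p on X such that 𝒜 ⊆ p. -/
open Set

variable {X : Type*} [Nonempty X] [TopologicalSpace X] [DiscreteTopology X]

/-!
The sets containing a finite intersection of members of `𝒜` form a filter, proper because `𝒜`
has the finite intersection property. This filter is again an `F`-family: the sets `A` for which
some `f ∈ F` vanishes on a member of the filter and equals `1` off `A` form a filter themselves
(for intersections take `f + g - f g`), and this filter contains `𝒜`. Zorn's lemma then applies,
since the union of a chain of `F`-filters is an `F`-filter.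
-/

section

variable {X : Type*}

theorem isSetFilter_sets (l : Filter X) [l.NeBot] : IsSetFilter l.sets :=
  ⟨⟨univ, Filter.univ_mem⟩, fun _ hA _ hB => Filter.inter_mem hA hB,
    fun _ hA _ hAB => Filter.mem_of_superset hA hAB, Filter.empty_notMem l⟩

theorem neBot_generate_of_fip [Nonempty X] {𝒜 : Set (Set X)} (h𝒜 : FIP 𝒜) :
    (Filter.generate 𝒜).NeBot := by
  refine Filter.generate_neBot_iff.2 fun t ht htfin => ?_
  obtain rfl | hne := t.eq_empty_or_nonempty
  · simp
  · simpa using h𝒜 htfin.toFinset (by simpa using ht) (by simpa using hne)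

theorem IsSetFilter.sUnion_of_isChain {c : Set (Set (Set X))} (hc : ∀ φ ∈ c, IsSetFilter φ)
    (hchain : IsChain (· ⊆ ·) c) (hne : c.Nonempty) : IsSetFilter (⋃₀ c) := by
  obtain ⟨φ, hφ⟩ := hne
  refine ⟨(hc φ hφ).1.mono (subset_sUnion_of_mem hφ), ?_, ?_, ?_⟩
  · rintro A ⟨φ₁, hφ₁, hA⟩ B ⟨φ₂, hφ₂, hB⟩
    rcases hchain.total hφ₁ hφ₂ with h | h
    · exact ⟨φ₂, hφ₂, (hc φ₂ hφ₂).2.1 A (h hA) B hB⟩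
    · exact ⟨φ₁, hφ₁, (hc φ₁ hφ₁).2.1 A hA B (h hB)⟩
  · rintro A ⟨φ₁, hφ₁, hA⟩ B hAB
    exact ⟨φ₁, hφ₁, (hc φ₁ hφ₁).2.2.1 A hA B hAB⟩
  · rintro ⟨φ₁, hφ₁, h⟩
    exact (hc φ₁ hφ₁).2.2.2 h

variable [TopologicalSpace X] (F : StarSubalgebra ℂ (BoundedContinuousFunction X ℂ))

def FSeparated (𝒜 : Set (Set X)) (A : Set X) : Prop :=
  ∃ B ∈ 𝒜, ∃ f ∈ F, (∀ x ∈ B, f x = 0) ∧ ∀ x ∉ A, f x = 1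

variable {F}

theorem FSeparated.mono {𝒜 ℬ : Set (Set X)} {A : Set X} (hA : FSeparated F 𝒜 A) (h : 𝒜 ⊆ ℬ) :
    FSeparated F ℬ A :=
  let ⟨B, hB, f, hf⟩ := hA
  ⟨B, h hB, f, hf⟩

theorem FSeparated.superset {𝒜 : Set (Set X)} {A A' : Set X} (hA : FSeparated F 𝒜 A)
    (hAA' : A ⊆ A') : FSeparated F 𝒜 A' :=
  let ⟨B, hB, f, hfF, hf0, hf1⟩ := hA
  ⟨B, hB, f, hfF, hf0, fun x hx => hf1 x fun h => hx (hAA' h)⟩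

theorem fSeparated_univ {𝒜 : Set (Set X)} (h𝒜 : 𝒜.Nonempty) : FSeparated F 𝒜 univ :=
  let ⟨B, hB⟩ := h𝒜
  ⟨B, hB, 0, zero_mem F, fun _ _ => rfl, fun _ hx => absurd (mem_univ _) hx⟩

theorem FSeparated.inter {l : Filter X} {A A' : Set X} (hA : FSeparated F l.sets A)
    (hA' : FSeparated F l.sets A') : FSeparated F l.sets (A ∩ A') := by
  obtain ⟨B, hB, f, hfF, hf0, hf1⟩ := hA
  obtain ⟨B', hB', g, hgF, hg0, hg1⟩ := hA'
  -- `1 - (f + g - f g) = (1 - f) (1 - g)`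
  refine ⟨B ∩ B', Filter.inter_mem hB hB', f + g - f * g,
    sub_mem (add_mem hfF hgF) (mul_mem hfF hgF), fun x hx => ?_, fun x hx => ?_⟩
  · simp [hf0 x hx.1, hg0 x hx.2]
  · rcases not_and_or.mp hx with hx | hx
    · simp [hf1 x hx]
    · simp [hg1 x hx]

variable (F) in
def Filter.fSeparated (l : Filter X) : Filter X where
  sets := {A | FSeparated F l.sets A}
  univ_sets := fSeparated_univ ⟨univ, Filter.univ_mem⟩
  sets_of_superset := FSeparated.superset
  inter_sets := FSeparated.inter

theorem fSeparated_of_mem_generate {𝒜 : Set (Set X)}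
    (h𝒜 : ∀ A ∈ 𝒜, A ≠ univ → FSeparated F 𝒜 A) {A : Set X} (hA : A ∈ Filter.generate 𝒜) :
    FSeparated F (Filter.generate 𝒜).sets A := by
  suffices (Filter.generate 𝒜).fSeparated F ≤ Filter.generate 𝒜 from this hA
  refine Filter.le_generate_iff.2 fun A hA => ?_
  by_cases hAu : A = univ
  · exact hAu ▸ Filter.univ_mem
  · exact (h𝒜 A hA hAu).mono fun _ => Filter.mem_generate_of_mem

theorem fFilter_generate {𝒜 : Set (Set X)} (h𝒜 : FFamily F 𝒜) [(Filter.generate 𝒜).NeBot] :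
    FFilter F (Filter.generate 𝒜).sets :=
  ⟨isSetFilter_sets _, ⟨univ, Filter.univ_mem⟩, fun _ hA => Filter.nonempty_of_mem hA,
    fun _ hA _ => fSeparated_of_mem_generate h𝒜.2.2 hA⟩

theorem FFamily.sUnion {c : Set (Set (Set X))} (hc : ∀ φ ∈ c, FFamily F φ) (hne : c.Nonempty) :
    FFamily F (⋃₀ c) := by
  obtain ⟨φ, hφ⟩ := hne
  refine ⟨(hc φ hφ).1.mono (subset_sUnion_of_mem hφ), ?_, ?_⟩
  · rintro A ⟨φ₁, hφ₁, hA⟩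
    exact (hc φ₁ hφ₁).2.1 A hA
  · rintro A ⟨φ₁, hφ₁, hA⟩ hAu
    exact FSeparated.mono ((hc φ₁ hφ₁).2.2 A hA hAu) (subset_sUnion_of_mem hφ₁)

theorem FFilter.exists_fUltrafilter_superset {φ : Set (Set X)} (hφ : FFilter F φ) :
    ∃ p, FUltrafilter F p ∧ φ ⊆ p := by
  obtain ⟨p, hφp, hp⟩ := zorn_subset_nonempty {ψ | FFilter F ψ}
    (fun c hc hchain hne => ⟨⋃₀ c,
      ⟨IsSetFilter.sUnion_of_isChain (fun ψ hψ => (hc hψ).1) hchain hne,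
        FFamily.sUnion (fun ψ hψ => (hc hψ).2) hne⟩,
      fun _ => subset_sUnion_of_mem⟩) φ hφ
  exact ⟨p, ⟨hp.prop, fun ψ hψ hpψ => (hp.eq_of_le hψ hpψ).symm⟩, hφp⟩

end

theorem stmt1_general (F : StarSubalgebra ℂ (BoundedContinuousFunction X ℂ))
    (𝒜 : Set (Set X)) (h𝒜 : FFamily F 𝒜) (hfip : FIP 𝒜) :
    ∃ p : Set (Set X), FUltrafilter F p ∧ 𝒜 ⊆ p := by
  have := neBot_generate_of_fip hfip
  obtain ⟨p, hp, hgen⟩ := (fFilter_generate h𝒜).exists_fUltrafilter_superset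
  exact ⟨p, hp, fun _ hA => hgen (Filter.mem_generate_of_mem hA)⟩

theorem stmt1 (F : StarSubalgebra ℂ (BoundedContinuousFunction X ℂ)) (hF : IsClosed (F : Set (BoundedContinuousFunction X ℂ)))
    (𝒜 : Set (Set X)) (h𝒜 : FFamily F 𝒜) (hfip : FIP 𝒜) :
    ∃ p : Set (Set X), FUltrafilter F p ∧ 𝒜 ⊆ p :=
  stmt1_general F 𝒜 h𝒜 hfip
end

section
/- Let A be a non-empty subset of X and let p ∈ δX. The following statements are equivalent: (i) p lies in the closure of e(A) in δX; (ii) A ∩ B ≠ ∅ for every B ∈ p; (iii) X(f,r) ∈ p for every f ∈ Z(A) and every r > 0. In particular, p lies in the closure of e(A) in δX for every A ∈ p. -/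
open Set

variable {X : Type*} [Nonempty X] [TopologicalSpace X] [DiscreteTopology X]

/-!
A point `p ∈ δX` lies in the closure of `e(A)` iff every `B ∈ p` is a `τ(F)`-neighbourhood of a
point of `A`. Since `p` is an `F`-family, every `B ∈ p` contains the neighbourhood `{|g| < 1}` of
each point of some `B' ∈ p`, where `g ∈ F` vanishes on `B'` and is `1` off `B`; this gives
(i) ⇔ (ii). For (ii) ⇒ (iii), the sets `B ∩ X(f,r)` with `B ∈ p` generate an `F`-filter finer
than `p`, so they all lie in `p` by maximality. Its `F`-family property needs, for each `r > 0`,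
some `u ∈ F` with `u = 0` on `X(f,r/2)` and `u = 1` off `X(f,r)`; as `F` is closed, such a `u`
is obtained from `f` by continuous functional calculus. For (iii) ⇒ (ii), if `A ∩ B = ∅` then
`1 - g ∈ Z(A)` while `X(1 - g, 1/2)` misses `B'`.
-/

open BoundedContinuousFunction

section

variable {Y : Type*}

namespace IsSetFilter

variable {φ : Set (Set Y)}

theorem mem_of_subset (hφ : IsSetFilter φ) {A B : Set Y} (hA : A ∈ φ) (hAB : A ⊆ B) : B ∈ φ :=
  hφ.2.2.1 A hA B hAB

theorem inter_mem (hφ : IsSetFilter φ) {A B : Set Y} (hA : A ∈ φ) (hB : B ∈ φ) : A ∩ B ∈ φ :=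
  hφ.2.1 A hA B hB

theorem univ_mem (hφ : IsSetFilter φ) : univ ∈ φ :=
  let ⟨_, hA⟩ := hφ.1
  hφ.mem_of_subset hA (subset_univ _)

theorem nonempty_of_mem (hφ : IsSetFilter φ) {A : Set Y} (hA : A ∈ φ) : A.Nonempty :=
  nonempty_iff_ne_empty.mpr fun h => hφ.2.2.2 (h ▸ hA)

end IsSetFilter

variable [TopologicalSpace Y]

theorem BoundedContinuousFunction.cfc_apply_of_continuousOn (f : Y →ᵇ ℂ) (ψ : ℂ → ℂ)
    (hψ : ContinuousOn ψ (spectrum ℂ f)) (y : Y) : cfc ψ f y = ψ (f y) := by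
  let ev : (Y →ᵇ ℂ) →⋆ₐ[ℂ] ℂ :=
    (ContinuousMap.evalStarAlgHom ℂ ℂ y).comp (toContinuousMapStarₐ ℂ)
  exact (ev.map_cfc ψ f hψ (continuous_eval_const y)).trans (cfc_algebraMap (A := ℂ) (f y) ψ)

theorem XSet_mono (f : Y →ᵇ ℂ) {r s : ℝ} (hrs : r ≤ s) : XSet f r ⊆ XSet f s :=
  fun _ hx => le_trans hx hrs

variable {F : StarSubalgebra ℂ (Y →ᵇ ℂ)}

theorem exists_mem_zero_on_XSet_one_off_XSet (hF : IsClosed (F : Set (Y →ᵇ ℂ)))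
    {f : Y →ᵇ ℂ} (hf : f ∈ F) {r : ℝ} (hr : 0 < r) :
    ∃ u ∈ F, (∀ x ∈ XSet f (r / 2), u x = 0) ∧ ∀ x ∉ XSet f r, u x = 1 := by
  set ψ : ℂ → ℂ := fun z => ((min 1 (max 0 (2 * ‖z‖ / r - 1)) : ℝ) : ℂ)
  have hψ : Continuous ψ := by fun_prop (disch := positivity)
  refine ⟨cfc ψ f, cfc_mem ψ hf, fun x hx => ?_, fun x hx => ?_⟩ <;>
    rw [cfc_apply_of_continuousOn f ψ hψ.continuousOn]
  · have : 2 * ‖f x‖ / r - 1 ≤ 0 := by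
      rw [sub_nonpos, div_le_one hr]; exact (le_div_iff₀' two_pos).mp hx
    simp [ψ, this]
  · have : 1 ≤ 2 * ‖f x‖ / r - 1 := by
      have hrx : r < ‖f x‖ := not_le.mp hx
      rw [le_sub_iff_add_le, le_div_iff₀ hr]; linarith
    simp [ψ, max_eq_right (zero_le_one.trans this), this]

theorem FFilter.exists_zero_on_mem_one_off {φ : Set (Set Y)} (hφ : FFilter F φ) {A : Set Y}
    (hA : A ∈ φ) : ∃ B ∈ φ, ∃ g ∈ F, (∀ x ∈ B, g x = 0) ∧ ∀ x ∉ A, g x = 1 := by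
  by_cases hAu : A = univ
  · subst hAu
    exact ⟨univ, hφ.1.univ_mem, 0, zero_mem F, fun _ _ => rfl, fun x hx => (hx trivial).elim⟩
  · exact hφ.2.2.2 A hA hAu

theorem mem_nhds_tauF_of_zero_of_one_off {g : Y →ᵇ ℂ} (hg : g ∈ F) {A : Set Y} {x : Y}
    (hx : g x = 0) (hA : ∀ y ∉ A, g y = 1) : A ∈ @nhds Y (tauF F) x := by
  let := tauF F
  have hcont : Continuous (g ·) :=
    continuous_iInf_dom (continuous_iInf_dom (i := hg) continuous_induced_dom)
  filter_upwards [hcont.continuousAt.preimage_mem_nhds (Metric.ball_mem_nhds (g x) one_pos)]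
    with y hy
  by_contra hyA
  simp [hx, hA y hyA] at hy

def refineByXSet (φ : Set (Set Y)) (f : Y →ᵇ ℂ) : Set (Set Y) :=
  {C | ∃ B ∈ φ, ∃ r > 0, B ∩ XSet f r ⊆ C}

theorem subset_refineByXSet (φ : Set (Set Y)) (f : Y →ᵇ ℂ) : φ ⊆ refineByXSet φ f :=
  fun B hB => ⟨B, hB, 1, one_pos, inter_subset_left⟩

theorem XSet_mem_refineByXSet {φ : Set (Set Y)} (hφ : IsSetFilter φ) (f : Y →ᵇ ℂ) {r : ℝ}
    (hr : 0 < r) : XSet f r ∈ refineByXSet φ f :=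
  ⟨univ, hφ.univ_mem, r, hr, inter_subset_right⟩

theorem IsSetFilter.refineByXSet {φ : Set (Set Y)} (hφ : IsSetFilter φ) (f : Y →ᵇ ℂ)
    (hne : ∀ B ∈ φ, ∀ r > 0, (B ∩ XSet f r).Nonempty) :
    IsSetFilter (refineByXSet φ f) := by
  refine ⟨⟨_, XSet_mem_refineByXSet hφ f one_pos⟩, ?_, ?_, ?_⟩
  · rintro C₁ ⟨B₁, hB₁, r₁, hr₁, hC₁⟩ C₂ ⟨B₂, hB₂, r₂, hr₂, hC₂⟩
    refine ⟨B₁ ∩ B₂, hφ.inter_mem hB₁ hB₂, min r₁ r₂, lt_min hr₁ hr₂, ?_⟩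
    rintro x ⟨⟨hx₁, hx₂⟩, hx⟩
    exact ⟨hC₁ ⟨hx₁, XSet_mono f (min_le_left _ _) hx⟩,
      hC₂ ⟨hx₂, XSet_mono f (min_le_right _ _) hx⟩⟩
  · rintro C ⟨B, hB, r, hr, hC⟩ D hCD
    exact ⟨B, hB, r, hr, hC.trans hCD⟩
  · rintro ⟨B, hB, r, hr, hempty⟩
    obtain ⟨x, hx⟩ := hne B hB r hr
    exact hempty hx

theorem FFilter.refineByXSet (hF : IsClosed (F : Set (Y →ᵇ ℂ))) {φ : Set (Set Y)}
    (hφ : FFilter F φ) {f : Y →ᵇ ℂ} (hf : f ∈ F)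
    (hne : ∀ B ∈ φ, ∀ r > 0, (B ∩ XSet f r).Nonempty) : FFilter F (refineByXSet φ f) := by
  have hψ := hφ.1.refineByXSet f hne
  refine ⟨hψ, hψ.1, fun C hC => hψ.nonempty_of_mem hC, ?_⟩
  rintro C ⟨B, hB, r, hr, hC⟩ -
  obtain ⟨B', hB', g, hg, hg0, hg1⟩ := hφ.exists_zero_on_mem_one_off hB
  obtain ⟨u, hu, hu0, hu1⟩ := exists_mem_zero_on_XSet_one_off_XSet hF hf hr
  -- `1 - (1 - g)(1 - u)` is `0` where `g` and `u` both vanish and `1` where either equals `1`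
  refine ⟨B' ∩ XSet f (r / 2), ⟨B', hB', r / 2, half_pos hr, subset_rfl⟩,
    1 - (1 - g) * (1 - u), sub_mem (one_mem F) (mul_mem (sub_mem (one_mem F) hg)
      (sub_mem (one_mem F) hu)), fun x hx => ?_, fun x hx => ?_⟩
  · simp [hg0 x hx.1, hu0 x hx.2]
  · by_cases hxB : x ∈ B
    · simp [hu1 x fun hxr => hx (hC ⟨hxB, hxr⟩)]
    · simp [hg1 x hxB]

namespace Delta

theorem isTopologicalBasis_hatSet :
    TopologicalSpace.IsTopologicalBasis {S : Set (Delta F) | ∃ A : Set Y, S = hatSet F A} := by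
  refine ⟨?_, ?_, rfl⟩
  · rintro _ ⟨A₁, rfl⟩ _ ⟨A₂, rfl⟩ q ⟨hq₁, hq₂⟩
    refine ⟨hatSet F (A₁ ∩ A₂), ⟨_, rfl⟩, q.2.1.1.inter_mem hq₁ hq₂, fun q' hq' => ?_⟩
    exact ⟨q'.2.1.1.mem_of_subset hq' inter_subset_left,
      q'.2.1.1.mem_of_subset hq' inter_subset_right⟩
  · exact sUnion_eq_univ_iff.mpr fun q => ⟨hatSet F univ, ⟨univ, rfl⟩, q.2.1.1.univ_mem⟩

theorem mem_closure_image_iff {e : Y → Delta F}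
    (he : ∀ x : Y, (e x).1 = {A : Set Y | A ∈ @nhds Y (tauF F) x}) {A : Set Y} {p : Delta F} :
    p ∈ closure (e '' A) ↔ ∀ B ∈ p.1, (A ∩ B).Nonempty := by
  rw [isTopologicalBasis_hatSet.mem_closure_iff]
  constructor
  · rintro h B hB
    obtain ⟨_, hxB, x, hxA, rfl⟩ := h _ ⟨B, rfl⟩ hB
    have hBx : B ∈ @nhds Y (tauF F) x := by simpa [hatSet, he] using hxB
    exact ⟨x, hxA, @mem_of_mem_nhds Y (tauF F) x B hBx⟩
  · rintro h _ ⟨B, rfl⟩ hB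
    obtain ⟨B', hB', g, hg, hg0, hg1⟩ := p.2.1.exists_zero_on_mem_one_off hB
    obtain ⟨x, hxA, hxB'⟩ := h B' hB'
    refine ⟨e x, ?_, x, hxA, rfl⟩
    simpa [hatSet, he] using mem_nhds_tauF_of_zero_of_one_off hg (hg0 x hxB') hg1

theorem mem_closure_image_of_mem {e : Y → Delta F}
    (he : ∀ x : Y, (e x).1 = {A : Set Y | A ∈ @nhds Y (tauF F) x}) {p : Delta F} {B : Set Y}
    (hB : B ∈ p.1) : p ∈ closure (e '' B) :=
  (mem_closure_image_iff he).mpr fun _ hC => p.2.1.1.nonempty_of_mem (p.2.1.1.inter_mem hB hC)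

theorem XSet_mem (hF : IsClosed (F : Set (Y →ᵇ ℂ))) (p : Delta F) {f : Y →ᵇ ℂ} (hf : f ∈ F)
    (hne : ∀ B ∈ p.1, ∀ r > 0, (B ∩ XSet f r).Nonempty) {r : ℝ} (hr : 0 < r) :
    XSet f r ∈ p.1 := by
  rw [← p.2.2 _ (p.2.1.refineByXSet hF hf hne) (subset_refineByXSet p.1 f)]
  exact XSet_mem_refineByXSet p.2.1.1 f hr

theorem forall_XSet_mem_of_forall_inter_nonempty (hF : IsClosed (F : Set (Y →ᵇ ℂ)))
    {A : Set Y} {p : Delta F} (h : ∀ B ∈ p.1, (A ∩ B).Nonempty) :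
    ∀ f ∈ ZSet F A, ∀ r : ℝ, 0 < r → XSet f r ∈ p.1 := by
  refine fun f hf r hr => p.XSet_mem hF hf.1 (fun B hB s hs => ?_) hr
  obtain ⟨x, hxA, hxB⟩ := h B hB
  exact ⟨x, hxB, show ‖f x‖ ≤ s by simpa [hf.2 x hxA] using hs.le⟩

theorem inter_nonempty_of_forall_XSet_mem {A : Set Y} {p : Delta F}
    (h : ∀ f ∈ ZSet F A, ∀ r : ℝ, 0 < r → XSet f r ∈ p.1) {B : Set Y} (hB : B ∈ p.1) :
    (A ∩ B).Nonempty := by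
  by_contra hAB
  obtain ⟨B', hB', g, hg, hg0, hg1⟩ := p.2.1.exists_zero_on_mem_one_off hB
  have hZ : 1 - g ∈ ZSet F A := ⟨sub_mem (one_mem F) hg, fun x hxA => by
    simp [hg1 x fun hxB => hAB ⟨x, hxA, hxB⟩]⟩
  obtain ⟨x, hxB', hx⟩ := p.2.1.1.nonempty_of_mem
    (p.2.1.1.inter_mem hB' (h _ hZ (1 / 2) one_half_pos))
  have : ‖(1 : ℂ) - g x‖ ≤ 1 / 2 := hx
  norm_num [hg0 x hxB'] at this

end Delta

end

theorem stmt7_general (F : StarSubalgebra ℂ (BoundedContinuousFunction X ℂ)) (hF : IsClosed (F : Set (BoundedContinuousFunction X ℂ))) (e : X → Delta F) (he : ∀ x : X, (e x).1 = {A : Set X | A ∈ @nhds X (tauF F) x})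
    (A : Set X) (p : Delta F) :
    List.TFAE
      [p ∈ closure (e '' A),
       ∀ B ∈ p.1, (A ∩ B).Nonempty,
       ∀ f ∈ ZSet F A, ∀ r : ℝ, 0 < r → XSet f r ∈ p.1] ∧
    ∀ B ∈ p.1, p ∈ closure (e '' B) := by
  refine ⟨?_, fun _ hB => Delta.mem_closure_image_of_mem he hB⟩
  tfae_have 1 ↔ 2 := Delta.mem_closure_image_iff he
  tfae_have 2 → 3 := Delta.forall_XSet_mem_of_forall_inter_nonempty hF
  tfae_have 3 → 2 := fun h _ hB => Delta.inter_nonempty_of_forall_XSet_mem h hB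
  tfae_finish

theorem stmt7 (F : StarSubalgebra ℂ (BoundedContinuousFunction X ℂ)) (hF : IsClosed (F : Set (BoundedContinuousFunction X ℂ))) (e : X → Delta F) (he : ∀ x : X, (e x).1 = {A : Set X | A ∈ @nhds X (tauF F) x})
    (A : Set X) (hA : A.Nonempty) (p : Delta F) :
    List.TFAE
      [p ∈ closure (e '' A),
       ∀ B ∈ p.1, (A ∩ B).Nonempty,
       ∀ f ∈ ZSet F A, ∀ r : ℝ, 0 < r → XSet f r ∈ p.1] ∧
    ∀ B ∈ p.1, p ∈ closure (e '' B) :=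
  stmt7_general F hF e he A p
end

section
/- For subsets A and B of X: (i) the set {p ∈ δX : X∖A ∈ p} equals δX minus the closure of e(A) in δX; (ii) if A is τ(F)-open, then the closure of e(A) in δX equals the closure of Â in δX; (iii) Â = B̂ if and only if A° = B°; (iv) Â = ∅ if and only if A° = ∅; (v) Â = δX if and only if A = X. -/
open Set

variable {X : Type*} [Nonempty X] [TopologicalSpace X] [DiscreteTopology X]

/-!
Every `F`-ultrafilter `p` contains, together with each member `U`, its `τ(F)`-interior `U°`:
for `U ≠ X` the `F`-family axiom gives `B ∈ p` and `f ∈ F` with `f = 0` on `B` and `f = 1` off `U`,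
and the `τ(F)`-open set `{|f| < 1/2}` lies between `B` and `U`. Hence `Â` only depends on `A°`,
and, since `e(x)` is the neighbourhood filter of `x`, `e(x) ∈ Â ↔ x ∈ A°`. Consequently `p` lies in
the closure of `e(A)` iff `A` meets `U°` for every `U ∈ p`.
-/

open Topology

section

variable {Y : Type*} [TopologicalSpace Y] {F : StarSubalgebra ℂ (BoundedContinuousFunction Y ℂ)}

namespace Delta

lemma univ_mem (p : Delta F) : univ ∈ p.1 := by
  obtain ⟨C, hC⟩ := p.2.1.1.1
  exact p.2.1.1.2.2.1 C hC univ (subset_univ C)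

lemma nonempty_of_mem (p : Delta F) {U : Set Y} (hU : U ∈ p.1) : U.Nonempty :=
  p.2.1.2.2.1 U hU

lemma inter_mem (p : Delta F) {U V : Set Y} (hU : U ∈ p.1) (hV : V ∈ p.1) : U ∩ V ∈ p.1 :=
  p.2.1.1.2.1 U hU V hV

lemma mem_of_superset (p : Delta F) {U V : Set Y} (hU : U ∈ p.1) (h : U ⊆ V) : V ∈ p.1 :=
  p.2.1.1.2.2.1 U hU V h

end Delta

lemma continuous_tauF_of_mem {f : BoundedContinuousFunction Y ℂ} (hf : f ∈ F) :
    Continuous[tauF F, _] (fun x => f x) :=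
  continuous_iff_le_induced.mpr (iInf₂_le f hf)

lemma Delta.interior_mem (p : Delta F) {U : Set Y} (hU : U ∈ p.1) :
    @interior Y (tauF F) U ∈ p.1 := by
  rcases eq_or_ne U univ with rfl | hne
  · rwa [@interior_univ Y (tauF F)]
  obtain ⟨B, hB, f, hfF, hf0, hf1⟩ := p.2.1.2.2.2 U hU hne
  have hV : IsOpen[tauF F] {x | ‖f x‖ < 1 / 2} :=
    @IsOpen.preimage Y ℂ (tauF F) _ _ (continuous_tauF_of_mem hfF) _
      (isOpen_lt continuous_norm continuous_const)
  have hVU : {x | ‖f x‖ < 1 / 2} ⊆ U := fun x hx => by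
    by_contra hxU
    norm_num [hf1 x hxU] at hx
  have hBV : B ⊆ {x | ‖f x‖ < 1 / 2} := fun x hx => by norm_num [hf0 x hx]
  exact p.mem_of_superset hB (hBV.trans (@interior_maximal Y (tauF F) _ _ hVU hV))

lemma hatSet_interior (A : Set Y) : hatSet F (@interior Y (tauF F) A) = hatSet F A :=
  Set.ext fun p =>
    ⟨fun hp => p.mem_of_superset hp (@interior_subset Y (tauF F) A), p.interior_mem⟩

lemma isTopologicalBasis_hatSet :
    TopologicalSpace.IsTopologicalBasis {S : Set (Delta F) | ∃ A : Set Y, S = hatSet F A} := by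
  refine ⟨?_, ?_, rfl⟩
  · rintro _ ⟨A, rfl⟩ _ ⟨B, rfl⟩ p ⟨hA, hB⟩
    exact ⟨hatSet F (A ∩ B), ⟨A ∩ B, rfl⟩, p.inter_mem hA hB,
      fun q hq => ⟨q.mem_of_superset hq inter_subset_left, q.mem_of_superset hq inter_subset_right⟩⟩
  · exact eq_univ_of_forall fun p => ⟨hatSet F univ, ⟨univ, rfl⟩, p.univ_mem⟩

variable {e : Y → Delta F} (he : ∀ x : Y, (e x).1 = {A : Set Y | A ∈ @nhds Y (tauF F) x})
include he

lemma apply_mem_hatSet_iff (x : Y) (U : Set Y) :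
    e x ∈ hatSet F U ↔ x ∈ @interior Y (tauF F) U := by
  show U ∈ (e x).1 ↔ _
  rw [he x, @mem_interior_iff_mem_nhds Y (tauF F)]
  rfl

lemma mem_closure_image_iff (A : Set Y) (p : Delta F) :
    p ∈ closure (e '' A) ↔ ∀ U ∈ p.1, (A ∩ @interior Y (tauF F) U).Nonempty := by
  rw [isTopologicalBasis_hatSet.mem_closure_iff]
  constructor
  · intro h U hU
    obtain ⟨_, hq, x, hxA, rfl⟩ := h (hatSet F U) ⟨U, rfl⟩ hU
    exact ⟨x, hxA, (apply_mem_hatSet_iff he x U).1 hq⟩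
  · rintro h _ ⟨U, rfl⟩ hU
    obtain ⟨x, hxA, hx⟩ := h U hU
    exact ⟨e x, (apply_mem_hatSet_iff he x U).2 hx, x, hxA, rfl⟩

lemma hatSet_subset_closure_image (A : Set Y) : hatSet F A ⊆ closure (e '' A) := by
  intro p hp
  rw [mem_closure_image_iff he]
  intro U hU
  have hsub : @interior Y (tauF F) (A ∩ U) ⊆ A ∩ @interior Y (tauF F) U := fun x hx =>
    ⟨(@interior_subset Y (tauF F) _ _ hx).1, @interior_mono Y (tauF F) _ _ inter_subset_right _ hx⟩
  exact (p.nonempty_of_mem (p.interior_mem (p.inter_mem hp hU))).mono hsub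

lemma hatSet_compl_eq_compl_closure_image (A : Set Y) :
    hatSet F Aᶜ = (closure (e '' A))ᶜ := by
  ext p
  rw [mem_compl_iff, mem_closure_image_iff he]
  push Not
  constructor
  · intro hp
    refine ⟨Aᶜ, hp, eq_empty_of_forall_notMem fun x ⟨hxA, hx⟩ => ?_⟩
    exact @interior_subset Y (tauF F) _ _ hx hxA
  · rintro ⟨U, hU, hUA⟩
    refine p.mem_of_superset (p.interior_mem hU) fun x hx hxA => ?_
    exact eq_empty_iff_forall_notMem.mp hUA x ⟨hxA, hx⟩

lemma closure_image_eq_closure_hatSet {A : Set Y} (hA : IsOpen[tauF F] A) :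
    closure (e '' A) = closure (hatSet F A) := by
  refine (closure_mono ?_).antisymm (closure_minimal (hatSet_subset_closure_image he A)
    isClosed_closure)
  rintro _ ⟨x, hxA, rfl⟩
  exact (apply_mem_hatSet_iff he x A).2 (by rwa [@IsOpen.interior_eq Y (tauF F) _ hA])

lemma hatSet_eq_hatSet_iff (A B : Set Y) :
    hatSet F A = hatSet F B ↔ @interior Y (tauF F) A = @interior Y (tauF F) B := by
  refine ⟨fun h => Set.ext fun x => ?_, fun h => by rw [← hatSet_interior A, h, hatSet_interior]⟩
  rw [← apply_mem_hatSet_iff he, ← apply_mem_hatSet_iff he, h]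

lemma hatSet_eq_empty_iff (A : Set Y) :
    hatSet F A = ∅ ↔ @interior Y (tauF F) A = ∅ := by
  have hempty : hatSet F (∅ : Set Y) = ∅ :=
    eq_empty_of_forall_notMem fun p hp => (p.nonempty_of_mem hp).ne_empty rfl
  rw [← hempty, hatSet_eq_hatSet_iff he, @interior_empty Y (tauF F)]

lemma hatSet_eq_univ_iff (A : Set Y) : hatSet F A = univ ↔ A = univ := by
  have huniv : hatSet F (univ : Set Y) = univ := eq_univ_of_forall Delta.univ_mem
  rw [← huniv, hatSet_eq_hatSet_iff he, @interior_univ Y (tauF F), @interior_eq_univ Y (tauF F)]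

end

theorem stmt8_general (F : StarSubalgebra ℂ (BoundedContinuousFunction X ℂ)) (e : X → Delta F) (he : ∀ x : X, (e x).1 = {A : Set X | A ∈ @nhds X (tauF F) x}) (A B : Set X) :
    hatSet F Aᶜ = (closure (e '' A))ᶜ ∧
    (@IsOpen X (tauF F) A → closure (e '' A) = closure (hatSet F A)) ∧
    (hatSet F A = hatSet F B ↔ @interior X (tauF F) A = @interior X (tauF F) B) ∧
    (hatSet F A = ∅ ↔ @interior X (tauF F) A = ∅) ∧
    (hatSet F A = Set.univ ↔ A = Set.univ) :=
  ⟨hatSet_compl_eq_compl_closure_image he A, closure_image_eq_closure_hatSet he,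
    hatSet_eq_hatSet_iff he A B, hatSet_eq_empty_iff he A, hatSet_eq_univ_iff he A⟩

theorem stmt8 (F : StarSubalgebra ℂ (BoundedContinuousFunction X ℂ)) (hF : IsClosed (F : Set (BoundedContinuousFunction X ℂ))) (e : X → Delta F) (he : ∀ x : X, (e x).1 = {A : Set X | A ∈ @nhds X (tauF F) x}) (A B : Set X) :
    hatSet F Aᶜ = (closure (e '' A))ᶜ ∧
    (@IsOpen X (tauF F) A → closure (e '' A) = closure (hatSet F A)) ∧
    (hatSet F A = hatSet F B ↔ @interior X (tauF F) A = @interior X (tauF F) B) ∧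
    (hatSet F A = ∅ ↔ @interior X (tauF F) A = ∅) ∧
    (hatSet F A = Set.univ ↔ A = Set.univ) :=
  stmt8_general F e he A B
end
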